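/- Let h ∈ Matrix (Fin n) (Fin n) ℂ be Hermitian (h = hᴴ) with operator norm ‖h‖ ≤ 1, and let s denote the positive semidefinite square root of the positive semidefinite matrix 1 − h². Then u := h + Complex.I • s is unitary (u * uᴴ = 1 = uᴴ * u) and h = (u + uᴴ) / 2. -/

import Mathlib

open scoped Matrix Matrix.Norms.L2Operator ComplexOrder

/-- The positive semidefinite square root of a positive semidefinite matrix (the definition
`Matrix.PosSemidef.sqrt` of the older Mathlib, removed since). -/
noncomputable def Matrix.PosSemidef.sqrt {n : Type*} [Fintype n] [DecidableEq n] {𝕜 : Type*}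
    [RCLike 𝕜] {A : Matrix n n 𝕜} (hA : A.PosSemidef) : Matrix n n 𝕜 :=
  hA.1.eigenvectorUnitary.1 * Matrix.diagonal ((↑) ∘ (Real.sqrt ∘ hA.1.eigenvalues)) *
    (star hA.1.eigenvectorUnitary : Matrix n n 𝕜)

/-! The square root `s` of `1 - h²` is a continuous function of `1 - h²`, so it is self-adjoint
and commutes with `h`; hence `(h ± i s)(h ∓ i s) = h² + s² = 1`, and `h` is the real part of
`h + i s`. -/

namespace Matrix.PosSemidef

variable {n 𝕜 : Type*} [Fintype n] [DecidableEq n] [RCLike 𝕜] {A : Matrix n n 𝕜}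

open scoped MatrixOrder

lemma sqrt_eq_cfcSqrt (hA : A.PosSemidef) : hA.sqrt = CFC.sqrt A := by
  rw [CFC.sqrt_eq_real_sqrt A hA.nonneg, cfcₙ_eq_cfc, hA.1.cfc_eq]
  simp [Matrix.PosSemidef.sqrt, Matrix.IsHermitian.cfc, Unitary.conjStarAlgAut_apply]

lemma sqrt_sq (hA : A.PosSemidef) : hA.sqrt ^ 2 = A := by
  rw [sqrt_eq_cfcSqrt, CFC.sq_sqrt A hA.nonneg]

lemma isSelfAdjoint_sqrt (hA : A.PosSemidef) : IsSelfAdjoint hA.sqrt := by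
  rw [sqrt_eq_cfcSqrt]
  exact (CFC.sqrt_nonneg A).isSelfAdjoint

lemma commute_sqrt {B : Matrix n n 𝕜} (hA : A.PosSemidef) (hAB : Commute A B) :
    Commute hA.sqrt B := by
  rw [sqrt_eq_cfcSqrt]
  exact hAB.cfcₙ_nnreal NNReal.sqrt

end Matrix.PosSemidef

section SelfAdjointPair

variable {A : Type*} [Ring A] [StarRing A] [Algebra ℂ A] [StarModule ℂ A] {a s : A}

lemma IsSelfAdjoint.star_add_I_smul (ha : IsSelfAdjoint a) (hs : IsSelfAdjoint s) :
    star (a + Complex.I • s) = a - Complex.I • s := by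
  simp [ha.star_eq, hs.star_eq, sub_eq_add_neg]

lemma IsSelfAdjoint.add_I_smul_mem_unitary (ha : IsSelfAdjoint a) (hs : IsSelfAdjoint s)
    (hcomm : Commute a s) (hsq : a ^ 2 + s ^ 2 = 1) : a + Complex.I • s ∈ unitary A := by
  rw [Unitary.mem_iff, ha.star_add_I_smul hs, ← hsq, sq, sq]
  constructor <;>
  · simp only [add_mul, mul_add, sub_mul, mul_sub, smul_mul_assoc, mul_smul_comm, hcomm.eq]
    match_scalars <;> simp

lemma IsSelfAdjoint.eq_half_add_I_smul_add_star (ha : IsSelfAdjoint a) (hs : IsSelfAdjoint s) :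
    a = (2 : ℂ)⁻¹ • ((a + Complex.I • s) + star (a + Complex.I • s)) := by
  rw [ha.star_add_I_smul hs]
  module

end SelfAdjointPair

theorem hermitian_contraction_real_part_of_unitary_general (n : ℕ)
    (h : Matrix (Fin n) (Fin n) ℂ) (hherm : h.IsHermitian)
    (hpsd : (1 - h ^ 2).PosSemidef) :
    (h + Complex.I • hpsd.sqrt) * (h + Complex.I • hpsd.sqrt)ᴴ = 1 ∧
    (h + Complex.I • hpsd.sqrt)ᴴ * (h + Complex.I • hpsd.sqrt) = 1 ∧
    h = (2 : ℂ)⁻¹ • ((h + Complex.I • hpsd.sqrt) + (h + Complex.I • hpsd.sqrt)ᴴ) := by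
  have hh : IsSelfAdjoint h := hherm
  have hs := hpsd.isSelfAdjoint_sqrt
  have hcomm : Commute h hpsd.sqrt :=
    (hpsd.commute_sqrt ((Commute.one_left h).sub_left (Commute.pow_self h 2))).symm
  have hu := hh.add_I_smul_mem_unitary hs hcomm (by rw [hpsd.sqrt_sq, add_sub_cancel])
  simp only [← Matrix.star_eq_conjTranspose]
  exact ⟨Unitary.mul_star_self_of_mem hu, Unitary.star_mul_self_of_mem hu,
    hh.eq_half_add_I_smul_add_star hs⟩

/-- If `h` is a Hermitian complex matrix with `‖h‖ ≤ 1` (L²-operator norm) and `s` is the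
positive semidefinite square root of `1 - h ^ 2`, then `u = h + I • s` is unitary and
`h = (u + uᴴ) / 2`. -/
theorem hermitian_contraction_real_part_of_unitary (n : ℕ)
    (h : Matrix (Fin n) (Fin n) ℂ) (hherm : h.IsHermitian) (hnorm : ‖h‖ ≤ 1)
    (hpsd : (1 - h ^ 2).PosSemidef) :
    (h + Complex.I • hpsd.sqrt) * (h + Complex.I • hpsd.sqrt)ᴴ = 1 ∧
    (h + Complex.I • hpsd.sqrt)ᴴ * (h + Complex.I • hpsd.sqrt) = 1 ∧
    h = (2 : ℂ)⁻¹ • ((h + Complex.I • hpsd.sqrt) + (h + Complex.I • hpsd.sqrt)ᴴ) :=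
  hermitian_contraction_real_part_of_unitary_general n h hherm hpsd
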